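/- arXiv:1212.4717 — 2 statements merged into one kernel-verified Lean document; each statement's English description precedes it below -/
import Mathlib

section
/- There exists a constant C > 0 depending only on λ and α such that for every step size t ∈ (0, 1], every k ≥ 0 and every initial value φ ≥ 0, E[Φₖ²] ≤ C (φ² + φ + 1) e^{(2λ + α²) k t}. -/
open MeasureTheory Real

/-- Standard Gaussian density on ℝ. -/
noncomputable def gaussDensity (z : ℝ) : ℝ := Real.exp (-z ^ 2 / 2) / Real.sqrt (2 * Real.pi)

/-- One-step update of the conditional odds process upon observing a normalized
increment `z` after a waiting time `t`, starting from odds `φ`. -/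
noncomputable def jfun (lam alp t φ z : ℝ) : ℝ :=
  Real.exp (alp * z * Real.sqrt t + (lam - alp ^ 2 / 2) * t) * φ +
    ∫ u in (0:ℝ)..t, lam * Real.exp ((lam + alp * z / Real.sqrt t) * u - alp ^ 2 * u ^ 2 / (2 * t))


/-- The discretely observed odds chain: `Φ₀ = φ` and `Φₖ = j(t, Φₖ₋₁, Zₖ)`. -/
noncomputable def oddsChain {Ω : Type*} (lam alp t φ : ℝ) (Z : ℕ → Ω → ℝ) : ℕ → Ω → ℝ
  | 0 => fun _ => φ
  | k + 1 => fun ω => jfun lam alp t (oddsChain lam alp t φ Z k ω) (Z (k + 1) ω)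

/-- The filtration `Fₖ = σ(Z₁, …, Zₖ)` generated by the first `k` observations
(`F₀` is trivial). -/
def obsFiltration {Ω : Type*} (Z : ℕ → Ω → ℝ) (k : ℕ) : MeasurableSpace Ω :=
  ⨆ i ∈ Set.Icc 1 k, MeasurableSpace.comap (Z i) inferInstance

/-!
Write `j(t, φ, z) = a(z) φ + b(z)`. Under the standard Gaussian law the slope has the log-normal
moments `E[a] = e^{λt}` and `E[a²] = e^{(2λ+α²)t}`, while `a ≤ e^{λ+|αz|}` and
`0 ≤ b ≤ λ t e^{λ+|αz|}` for `t ≤ 1`, and `e^{λ+|αz|}` has a finite Gaussian second moment `M`.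
Since `Φₖ` is `Fₖ`-measurable and `Zₖ₊₁` is independent of `Fₖ`, the moments `mₖ = E[Φₖ]` and
`vₖ = E[Φₖ²]` obey, with `K = (λ² + 2λ) M`,
`mₖ₊₁ ≤ e^{λt} mₖ + K t` and `vₖ₊₁ ≤ e^{(2λ+α²)t} vₖ + K t mₖ + K t²`.
The first gives `mₖ ≤ (φ + K/λ) e^{λkt}`; because `2λ + α² > λ`, the forcing term `K t mₖ` of the
second grows strictly slower than `e^{(2λ+α²)kt}` and is absorbed into it.
-/

open ProbabilityTheory Set

local notation "ν" => gaussianReal 0 1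

lemma integral_exp_mul_gaussianReal (m : ℝ) (v : NNReal) (c : ℝ) :
    ∫ z, exp (c * z) ∂gaussianReal m v = exp (m * c + v * c ^ 2 / 2) := by
  simpa [mgf] using congrFun (mgf_fun_id_gaussianReal (μ := m) (v := v)) c

lemma integrable_exp_mul_abs_gaussianReal (m : ℝ) (v : NNReal) (c : ℝ) :
    Integrable (fun z => exp (c * |z|)) (gaussianReal m v) := by
  refine ((integrable_exp_mul_gaussianReal c).add (integrable_exp_mul_gaussianReal (-c))).mono'
    (by fun_prop) (.of_forall fun z => ?_)
  rw [norm_of_nonneg (exp_pos _).le]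
  rcases abs_choice z with h | h <;> rw [h] <;> simp [(exp_pos _).le]

section affineStep

variable {Ω : Type*} [MeasurableSpace Ω] {μ : Measure Ω} {X Z : Ω → ℝ} {a b : ℝ → ℝ}

lemma ProbabilityTheory.IndepFun.memLp_two_mul {Y : Ω → ℝ} (hXY : IndepFun X Y μ)
    (hX : MemLp X 2 μ) (hY : MemLp Y 2 μ) : MemLp (X * Y) 2 μ := by
  refine (memLp_two_iff_integrable_sq (hX.1.mul hY.1)).mpr ?_
  simp_rw [Pi.mul_apply, mul_pow]
  exact (hXY.comp (measurable_id.pow_const 2) (measurable_id.pow_const 2)).integrable_mul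
    hX.integrable_sq hY.integrable_sq

lemma ProbabilityTheory.IndepFun.memLp_two_comp_mul_add (hXZ : IndepFun X Z μ)
    (hZ : AEMeasurable Z μ) (hX : MemLp X 2 μ) (ha : MemLp a 2 (μ.map Z))
    (hb : MemLp b 2 (μ.map Z)) : MemLp (fun ω => a (Z ω) * X ω + b (Z ω)) 2 μ :=
  ((hXZ.symm.comp₀ hZ hX.1.aemeasurable ha.1.aemeasurable aemeasurable_id).memLp_two_mul
    (ha.comp_of_map hZ) hX).add (hb.comp_of_map hZ)

variable [IsFiniteMeasure μ]

lemma ProbabilityTheory.IndepFun.integral_comp_mul_add (hXZ : IndepFun X Z μ)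
    (hZ : AEMeasurable Z μ) (hX : MemLp X 2 μ) (ha : MemLp a 2 (μ.map Z))
    (hb : MemLp b 2 (μ.map Z)) :
    ∫ ω, a (Z ω) * X ω + b (Z ω) ∂μ =
      (∫ z, a z ∂μ.map Z) * (∫ ω, X ω ∂μ) + ∫ z, b z ∂μ.map Z := by
  have hAX : IndepFun (a ∘ Z) X μ :=
    hXZ.symm.comp₀ hZ hX.1.aemeasurable ha.1.aemeasurable aemeasurable_id
  have hAXi : Integrable (fun ω => a (Z ω) * X ω) μ :=
    (hAX.memLp_two_mul (ha.comp_of_map hZ) hX).integrable one_le_two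
  have hprod : ∫ ω, a (Z ω) * X ω ∂μ = (∫ ω, a (Z ω) ∂μ) * ∫ ω, X ω ∂μ :=
    hAX.integral_mul_eq_mul_integral (ha.comp_of_map hZ).1 hX.1
  have hBi : Integrable (fun ω => b (Z ω)) μ := (hb.comp_of_map hZ).integrable one_le_two
  rw [integral_add hAXi hBi, hprod,
    integral_map hZ ha.1, integral_map hZ hb.1]

lemma ProbabilityTheory.IndepFun.integral_comp_mul_add_sq (hXZ : IndepFun X Z μ)
    (hZ : AEMeasurable Z μ) (hX : MemLp X 2 μ) (ha : MemLp a 2 (μ.map Z))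
    (hb : MemLp b 2 (μ.map Z)) :
    ∫ ω, (a (Z ω) * X ω + b (Z ω)) ^ 2 ∂μ =
      (∫ z, a z ^ 2 ∂μ.map Z) * (∫ ω, X ω ^ 2 ∂μ)
        + 2 * (∫ z, a z * b z ∂μ.map Z) * (∫ ω, X ω ∂μ) + ∫ z, b z ^ 2 ∂μ.map Z := by
  have hXm := hX.1.aemeasurable
  have hA2X2 : IndepFun (fun ω => a (Z ω) ^ 2) (fun ω => X ω ^ 2) μ :=
    hXZ.symm.comp₀ (φ := fun x => a x ^ 2) (ψ := fun x => x ^ 2) hZ hXm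
      (ha.1.aemeasurable.pow_const 2) (by fun_prop)
  have hABX : IndepFun (fun ω => a (Z ω) * b (Z ω)) X μ :=
    hXZ.symm.comp₀ (φ := fun x => a x * b x) (ψ := id) hZ hXm
      (ha.1.aemeasurable.mul hb.1.aemeasurable) aemeasurable_id
  have hA2 : Integrable (fun ω => a (Z ω) ^ 2) μ := (ha.comp_of_map hZ).integrable_sq
  have hAB : Integrable (fun ω => a (Z ω) * b (Z ω)) μ :=
    (ha.integrable_mul hb).comp_aemeasurable hZ
  have hB2 : Integrable (fun ω => b (Z ω) ^ 2) μ := (hb.comp_of_map hZ).integrable_sq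
  have hA2X2i : Integrable (fun ω => a (Z ω) ^ 2 * X ω ^ 2) μ :=
    hA2X2.integrable_mul hA2 hX.integrable_sq
  have hABXi : Integrable (fun ω => a (Z ω) * b (Z ω) * X ω) μ :=
    hABX.integrable_mul hAB (hX.integrable one_le_two)
  have hA2X2e : ∫ ω, a (Z ω) ^ 2 * X ω ^ 2 ∂μ = (∫ ω, a (Z ω) ^ 2 ∂μ) * ∫ ω, X ω ^ 2 ∂μ :=
    hA2X2.integral_mul_eq_mul_integral hA2.1 hX.integrable_sq.1
  have hABXe : ∫ ω, a (Z ω) * b (Z ω) * X ω ∂μ = (∫ ω, a (Z ω) * b (Z ω) ∂μ) * ∫ ω, X ω ∂μ :=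
    hABX.integral_mul_eq_mul_integral hAB.1 hX.1
  calc ∫ ω, (a (Z ω) * X ω + b (Z ω)) ^ 2 ∂μ
      = ∫ ω, (a (Z ω) ^ 2 * X ω ^ 2 + 2 * (a (Z ω) * b (Z ω) * X ω)) + b (Z ω) ^ 2 ∂μ := by
        congr 1; ext ω; ring
    _ = _ := by
      rw [integral_add (f := fun ω => a (Z ω) ^ 2 * X ω ^ 2 + 2 * (a (Z ω) * b (Z ω) * X ω))
          (hA2X2i.add (hABXi.const_mul 2)) hB2,
        integral_add hA2X2i (hABXi.const_mul 2), integral_const_mul, hA2X2e, hABXe,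
        integral_map (f := fun z => a z ^ 2) hZ (ha.1.pow 2),
        integral_map (f := fun z => a z * b z) hZ (ha.1.mul hb.1),
        integral_map (f := fun z => b z ^ 2) hZ (hb.1.pow 2)]
      ring

end affineStep

section recursion

variable {l c K t x₀ : ℝ} {m v : ℕ → ℝ}

lemma le_of_le_exp_mul_add (hl : 0 < l) (hK : 0 ≤ K) (h0 : m 0 ≤ x₀)
    (hstep : ∀ k, m (k + 1) ≤ exp (l * t) * m k + K * t) (k : ℕ) :
    m k ≤ (x₀ + K / l) * exp (l * k * t) - K / l := by
  induction k with
  | zero => simpa using h0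
  | succ k ih =>
    have hgrowth : K * t ≤ K / l * (exp (l * t) - 1) :=
      calc K * t = K / l * (l * t) := by field_simp
        _ ≤ K / l * (exp (l * t) - 1) := by gcongr; linarith [add_one_le_exp (l * t)]
    calc m (k + 1) ≤ exp (l * t) * ((x₀ + K / l) * exp (l * k * t) - K / l) + K * t :=
          (hstep k).trans (by gcongr)
      _ ≤ (x₀ + K / l) * exp (l * ↑(k + 1) * t) - K / l := by
        rw [show l * ↑(k + 1) * t = l * t + l * k * t by push_cast; ring, exp_add]
        linarith

lemma le_of_coupled_recursion (hl : 0 < l) (hlc : l < c) (hK : 0 ≤ K) (ht : t ∈ Icc 0 1)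
    (hx₀ : 0 ≤ x₀) (hm0 : m 0 ≤ x₀) (hv0 : v 0 ≤ x₀ ^ 2)
    (hm : ∀ k, m (k + 1) ≤ exp (l * t) * m k + K * t)
    (hv : ∀ k, v (k + 1) ≤ exp (c * t) * v k + K * t * m k + K * t ^ 2) (k : ℕ) :
    v k ≤ x₀ ^ 2 * exp (c * k * t)
      + K * (x₀ + K / l) / (c - l) * (exp (c * k * t) - exp (l * k * t))
      + K / c * (exp (c * k * t) - 1) := by
  set P := K * (x₀ + K / l) / (c - l)
  set Q := K / c
  have hc : 0 < c := hl.trans hlc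
  induction k with
  | zero => simpa using hv0
  | succ k ih =>
    have hmk : m k ≤ (x₀ + K / l) * exp (l * k * t) := by
      linarith [le_of_le_exp_mul_add hl hK hm0 hm k, div_nonneg hK hl.le]
    have hgap₁ : K * (x₀ + K / l) * t ≤ P * (exp (c * t) - exp (l * t)) := by
      have h : (c - l) * t ≤ exp (c * t) - exp (l * t) := by
        have h₁ := add_one_le_exp ((c - l) * t)
        have h₂ : 1 ≤ exp (l * t) := one_le_exp (mul_nonneg hl.le ht.1)
        have h₃ : exp (c * t) = exp (l * t) * exp ((c - l) * t) := by rw [← exp_add]; ring_nf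
        nlinarith [mul_nonneg (sub_nonneg.mpr hlc.le) ht.1]
      have hP : 0 ≤ P := by positivity
      calc K * (x₀ + K / l) * t = P * ((c - l) * t) := by
            simp only [P]; field_simp [(sub_pos.mpr hlc).ne']
        _ ≤ P * (exp (c * t) - exp (l * t)) := by gcongr
    have hgap₂ : K * t ^ 2 ≤ Q * (exp (c * t) - 1) :=
      calc K * t ^ 2 ≤ K * t := by gcongr; nlinarith [ht.1, ht.2]
        _ = Q * (c * t) := by simp only [Q]; field_simp
        _ ≤ Q * (exp (c * t) - 1) := by gcongr; linarith [add_one_le_exp (c * t)]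
    have hprev := mul_le_mul_of_nonneg_left ih (exp_pos (c * t)).le
    have hforce := mul_le_mul_of_nonneg_left hmk (mul_nonneg hK ht.1)
    have hgap₁' := mul_le_mul_of_nonneg_right hgap₁ (exp_pos (l * k * t)).le
    rw [show c * ↑(k + 1) * t = c * t + c * k * t by push_cast; ring,
      show l * ↑(k + 1) * t = l * t + l * k * t by push_cast; ring, exp_add, exp_add]
    nlinarith [hv k]

lemma le_mul_exp_of_coupled_recursion (hl : 0 < l) (hlc : l < c) (hK : 0 ≤ K)
    (ht : t ∈ Icc 0 1) (hx₀ : 0 ≤ x₀) (hm0 : m 0 ≤ x₀) (hv0 : v 0 ≤ x₀ ^ 2)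
    (hm : ∀ k, m (k + 1) ≤ exp (l * t) * m k + K * t)
    (hv : ∀ k, v (k + 1) ≤ exp (c * t) * v k + K * t * m k + K * t ^ 2) (k : ℕ) :
    v k ≤ (1 + K * (1 + K / l) / (c - l) + K / c) * (x₀ ^ 2 + x₀ + 1) * exp (c * k * t) := by
  have hsub : 0 < c - l := sub_pos.mpr hlc
  have hA : 0 ≤ K * (1 + K / l) / (c - l) := by positivity
  have hQ : 0 ≤ K / c := div_nonneg hK (hl.trans hlc).le
  have hP : K * (x₀ + K / l) / (c - l) ≤ K * (1 + K / l) / (c - l) * (x₀ + 1) := by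
    have hx : x₀ + K / l ≤ (1 + K / l) * (x₀ + 1) := by nlinarith [div_nonneg hK hl.le]
    calc K * (x₀ + K / l) / (c - l) ≤ K * ((1 + K / l) * (x₀ + 1)) / (c - l) := by gcongr
      _ = _ := by ring
  calc v k ≤ (x₀ ^ 2 + K * (x₀ + K / l) / (c - l) + K / c) * exp (c * k * t) := by
        nlinarith [le_of_coupled_recursion hl hlc hK ht hx₀ hm0 hv0 hm hv k,
          exp_pos (l * k * t), div_nonneg (mul_nonneg hK (by positivity : 0 ≤ x₀ + K / l)) hsub.le]
    _ ≤ _ := by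
      gcongr
      nlinarith [mul_nonneg hA (sq_nonneg x₀), mul_nonneg hQ (sq_nonneg x₀), mul_nonneg hQ hx₀]

end recursion

noncomputable def jfunSlope (lam alp t z : ℝ) : ℝ :=
  exp (alp * z * sqrt t + (lam - alp ^ 2 / 2) * t)

noncomputable def jfunIntercept (lam alp t z : ℝ) : ℝ :=
  ∫ u in (0:ℝ)..t, lam * exp ((lam + alp * z / sqrt t) * u - alp ^ 2 * u ^ 2 / (2 * t))

noncomputable def jfunEnvelope (lam alp z : ℝ) : ℝ := exp (lam + |alp * z|)

section jfun

variable {lam alp t : ℝ}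

lemma continuous_jfunSlope : Continuous (jfunSlope lam alp t) := by
  unfold jfunSlope; fun_prop

lemma continuous_jfunIntercept : Continuous (jfunIntercept lam alp t) := by
  unfold jfunIntercept; fun_prop

lemma continuous_jfunEnvelope : Continuous (jfunEnvelope lam alp) := by
  unfold jfunEnvelope; fun_prop

lemma integral_jfunSlope_pow (ht : 0 ≤ t) (n : ℕ) :
    ∫ z, jfunSlope lam alp t z ^ n ∂ν =
      exp (n * (lam + (n - 1) * alp ^ 2 / 2) * t) := by
  have h (z : ℝ) : jfunSlope lam alp t z ^ n =
      exp (n * (lam - alp ^ 2 / 2) * t) * exp (n * alp * sqrt t * z) := by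
    rw [jfunSlope, ← exp_nat_mul, ← exp_add]; ring_nf
  simp_rw [h, integral_const_mul, integral_exp_mul_gaussianReal, ← exp_add, mul_pow,
    sq_sqrt ht, NNReal.coe_one]
  ring_nf

lemma jfunSlope_pos (z : ℝ) : 0 < jfunSlope lam alp t z := exp_pos _

lemma jfunEnvelope_pos (z : ℝ) : 0 < jfunEnvelope lam alp z := exp_pos _

lemma one_le_jfunEnvelope (hlam : 0 ≤ lam) (z : ℝ) : 1 ≤ jfunEnvelope lam alp z :=
  one_le_exp (by positivity)

lemma jfunSlope_le_jfunEnvelope (hlam : 0 ≤ lam) (ht : t ∈ Icc 0 1) (z : ℝ) :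
    jfunSlope lam alp t z ≤ jfunEnvelope lam alp z := by
  have hsqrt : sqrt t ≤ 1 := sqrt_le_one.mpr ht.2
  have hz : alp * z * sqrt t ≤ |alp * z| :=
    (mul_le_mul_of_nonneg_right (le_abs_self _) (sqrt_nonneg t)).trans
      (mul_le_of_le_one_right (abs_nonneg _) hsqrt)
  have hdrift : (lam - alp ^ 2 / 2) * t ≤ lam := by nlinarith [ht.1, ht.2, sq_nonneg alp]
  exact exp_le_exp.mpr (by linarith)

lemma jfunIntercept_nonneg (hlam : 0 ≤ lam) (ht : 0 ≤ t) (z : ℝ) :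
    0 ≤ jfunIntercept lam alp t z :=
  intervalIntegral.integral_nonneg ht fun _ _ => by positivity

lemma jfunIntercept_le (hlam : 0 ≤ lam) (ht : t ∈ Ioc 0 1) (z : ℝ) :
    jfunIntercept lam alp t z ≤ lam * t * jfunEnvelope lam alp z := by
  have hst : 0 < sqrt t := sqrt_pos.mpr ht.1
  have hexponent : ∀ u ∈ Icc 0 t,
      (lam + alp * z / sqrt t) * u - alp ^ 2 * u ^ 2 / (2 * t) ≤ lam + |alp * z| := by
    intro u ⟨hu0, hut⟩
    have hu : u / sqrt t ≤ 1 := by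
      rw [div_le_one hst]
      calc u ≤ t := hut
        _ = sqrt t * sqrt t := (mul_self_sqrt ht.1.le).symm
        _ ≤ sqrt t := mul_le_of_le_one_left hst.le (sqrt_le_one.mpr ht.2)
    have hz : alp * z / sqrt t * u ≤ |alp * z| := by
      rw [div_mul_eq_mul_div, mul_div_assoc]
      exact (mul_le_mul_of_nonneg_right (le_abs_self _) (by positivity)).trans
        (mul_le_of_le_one_right (abs_nonneg _) hu)
    have hquad : 0 ≤ alp ^ 2 * u ^ 2 / (2 * t) := div_nonneg (by positivity) (by linarith [ht.1])
    nlinarith [ht.2]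
  calc jfunIntercept lam alp t z ≤ ∫ _ in (0:ℝ)..t, lam * jfunEnvelope lam alp z := by
        refine intervalIntegral.integral_mono_on ht.1.le
          (Continuous.intervalIntegrable (by fun_prop) _ _) intervalIntegrable_const
          fun u hu => ?_
        exact mul_le_mul_of_nonneg_left (exp_le_exp.mpr (hexponent u hu)) hlam
    _ = lam * t * jfunEnvelope lam alp z := by
        rw [intervalIntegral.integral_const, smul_eq_mul, sub_zero]; ring

end jfun

section gaussianMoments

variable {lam alp t : ℝ}

lemma memLp_jfunEnvelope : MemLp (jfunEnvelope lam alp) 2 ν := by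
  refine (memLp_two_iff_integrable_sq continuous_jfunEnvelope.aestronglyMeasurable).mpr ?_
  have h (z : ℝ) : jfunEnvelope lam alp z ^ 2 = exp (2 * lam) * exp (2 * |alp| * |z|) := by
    rw [jfunEnvelope, ← exp_nat_mul, ← exp_add, abs_mul]; ring_nf
  simp_rw [h]
  exact (integrable_exp_mul_abs_gaussianReal 0 1 _).const_mul _

lemma memLp_jfunSlope (hlam : 0 ≤ lam) (ht : t ∈ Icc 0 1) : MemLp (jfunSlope lam alp t) 2 ν :=
  memLp_jfunEnvelope.of_le continuous_jfunSlope.aestronglyMeasurable <| .of_forall fun z => by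
    rw [norm_of_nonneg (jfunSlope_pos z).le,
      norm_of_nonneg (jfunEnvelope_pos z).le]
    exact jfunSlope_le_jfunEnvelope hlam ht z

lemma memLp_jfunIntercept (hlam : 0 ≤ lam) (ht : t ∈ Ioc 0 1) :
    MemLp (jfunIntercept lam alp t) 2 ν :=
  (memLp_jfunEnvelope.const_mul (lam * t)).of_le continuous_jfunIntercept.aestronglyMeasurable <|
    .of_forall fun z => by
      rw [norm_of_nonneg (jfunIntercept_nonneg hlam ht.1.le z),
        norm_of_nonneg (mul_nonneg (mul_nonneg hlam ht.1.le) (jfunEnvelope_pos z).le)]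
      exact jfunIntercept_le hlam ht z

lemma integral_jfunIntercept_le (hlam : 0 ≤ lam) (ht : t ∈ Ioc 0 1) :
    ∫ z, jfunIntercept lam alp t z ∂ν ≤ lam * t * ∫ z, jfunEnvelope lam alp z ^ 2 ∂ν := by
  rw [← integral_const_mul]
  refine integral_mono ((memLp_jfunIntercept hlam ht).integrable one_le_two)
    (memLp_jfunEnvelope.integrable_sq.const_mul _) fun z => ?_
  have ht0 := ht.1
  calc jfunIntercept lam alp t z ≤ lam * t * jfunEnvelope lam alp z := jfunIntercept_le hlam ht z
    _ ≤ lam * t * jfunEnvelope lam alp z ^ 2 := by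
      gcongr; exact le_self_pow₀ (one_le_jfunEnvelope hlam z) two_ne_zero

lemma integral_jfunSlope_mul_jfunIntercept_le (hlam : 0 ≤ lam) (ht : t ∈ Ioc 0 1) :
    ∫ z, jfunSlope lam alp t z * jfunIntercept lam alp t z ∂ν ≤
      lam * t * ∫ z, jfunEnvelope lam alp z ^ 2 ∂ν := by
  rw [← integral_const_mul]
  refine integral_mono ((memLp_jfunSlope hlam (Ioc_subset_Icc_self ht)).integrable_mul
    (memLp_jfunIntercept hlam ht)) (memLp_jfunEnvelope.integrable_sq.const_mul _) fun z => ?_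
  calc jfunSlope lam alp t z * jfunIntercept lam alp t z
      ≤ jfunEnvelope lam alp z * (lam * t * jfunEnvelope lam alp z) :=
        mul_le_mul (jfunSlope_le_jfunEnvelope hlam (Ioc_subset_Icc_self ht) z)
          (jfunIntercept_le hlam ht z) (jfunIntercept_nonneg hlam ht.1.le z)
          (jfunEnvelope_pos z).le
    _ = lam * t * jfunEnvelope lam alp z ^ 2 := by ring

lemma integral_jfunIntercept_sq_le (hlam : 0 ≤ lam) (ht : t ∈ Ioc 0 1) :
    ∫ z, jfunIntercept lam alp t z ^ 2 ∂ν ≤ (lam * t) ^ 2 * ∫ z, jfunEnvelope lam alp z ^ 2 ∂ν := by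
  rw [← integral_const_mul]
  refine integral_mono (memLp_jfunIntercept hlam ht).integrable_sq
    (memLp_jfunEnvelope.integrable_sq.const_mul _) fun z => ?_
  calc jfunIntercept lam alp t z ^ 2 ≤ (lam * t * jfunEnvelope lam alp z) ^ 2 :=
        pow_le_pow_left₀ (jfunIntercept_nonneg hlam ht.1.le z) (jfunIntercept_le hlam ht z) 2
    _ = (lam * t) ^ 2 * jfunEnvelope lam alp z ^ 2 := by ring

end gaussianMoments

section obsFiltration

variable {Ω : Type*} {Z : ℕ → Ω → ℝ}

lemma obsFiltration_mono : Monotone (obsFiltration Z) := fun _ _ hkl =>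
  biSup_mono fun _ hi => ⟨hi.1, hi.2.trans hkl⟩

lemma comap_le_obsFiltration {i k : ℕ} (hi : i ∈ Icc 1 k) :
    MeasurableSpace.comap (Z i) inferInstance ≤ obsFiltration Z k :=
  le_iSup₂ (f := fun i (_ : i ∈ Icc 1 k) => MeasurableSpace.comap (Z i) inferInstance) i hi

lemma indep_obsFiltration_comap_succ [MeasurableSpace Ω] {μ : Measure Ω}
    (hZ : ∀ k, Measurable (Z k))
    (hZindep : iIndepFun Z μ) (k : ℕ) :
    Indep (obsFiltration Z k) (MeasurableSpace.comap (Z (k + 1)) inferInstance) μ := by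
  have h := indep_iSup_of_disjoint (fun i => (hZ i).comap_le) hZindep.iIndep
    (S := Icc 1 k) (T := {k + 1}) (by simp)
  rwa [iSup_singleton] at h

end obsFiltration

section oddsChain

variable {Ω : Type*} {lam alp t φ : ℝ} {Z : ℕ → Ω → ℝ}

lemma oddsChain_succ (k : ℕ) (ω : Ω) :
    oddsChain lam alp t φ Z (k + 1) ω =
      jfunSlope lam alp t (Z (k + 1) ω) * oddsChain lam alp t φ Z k ω +
        jfunIntercept lam alp t (Z (k + 1) ω) := rfl

lemma oddsChain_nonneg (hlam : 0 ≤ lam) (ht : 0 ≤ t) (hφ : 0 ≤ φ) (k : ℕ) (ω : Ω) :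
    0 ≤ oddsChain lam alp t φ Z k ω := by
  induction k with
  | zero => exact hφ
  | succ k ih =>
    rw [oddsChain_succ]
    exact add_nonneg (mul_nonneg (jfunSlope_pos _).le ih) (jfunIntercept_nonneg hlam ht _)

lemma measurable_oddsChain_obsFiltration (k : ℕ) :
    Measurable[obsFiltration Z k] (oddsChain lam alp t φ Z k) := by
  induction k with
  | zero => exact measurable_const
  | succ k ih =>
    have hZk : Measurable[obsFiltration Z (k + 1)] (Z (k + 1)) :=
      Measurable.of_comap_le (comap_le_obsFiltration ⟨by omega, le_rfl⟩)
    have hΦk := ih.mono (obsFiltration_mono (Nat.le_succ k)) le_rfl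
    exact ((continuous_jfunSlope.measurable.comp hZk).mul hΦk).add
      (continuous_jfunIntercept.measurable.comp hZk)

lemma oddsChain_indepFun [MeasurableSpace Ω] {μ : Measure Ω} (hZ : ∀ k, Measurable (Z k))
    (hZindep : iIndepFun Z μ) (k : ℕ) :
    IndepFun (oddsChain lam alp t φ Z k) (Z (k + 1)) μ :=
  (IndepFun_iff_Indep _ _ _).mpr <| indep_of_indep_of_le_left
    (indep_obsFiltration_comap_succ hZ hZindep k) (measurable_oddsChain_obsFiltration k).comap_le

end oddsChain

section oddsChainMoments

variable {Ω : Type*} [MeasurableSpace Ω] {μ : Measure Ω} [IsProbabilityMeasure μ]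
  {lam alp t φ : ℝ} {Z : ℕ → Ω → ℝ}

lemma memLp_oddsChain (hlam : 0 ≤ lam) (ht : t ∈ Ioc 0 1) (hZ : ∀ k, Measurable (Z k))
    (hZdist : ∀ k, 1 ≤ k → μ.map (Z k) = ν) (hZindep : iIndepFun Z μ) (k : ℕ) :
    MemLp (oddsChain lam alp t φ Z k) 2 μ := by
  induction k with
  | zero => exact memLp_const φ
  | succ k ih =>
    have hlaw := hZdist (k + 1) (by omega)
    exact (oddsChain_indepFun hZ hZindep k).memLp_two_comp_mul_add (hZ _).aemeasurable ih
      (hlaw ▸ memLp_jfunSlope hlam (Ioc_subset_Icc_self ht))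
      (hlaw ▸ memLp_jfunIntercept hlam ht)

lemma integral_oddsChain_succ_le (hlam : 0 ≤ lam) (ht : t ∈ Ioc 0 1)
    (hZ : ∀ k, Measurable (Z k)) (hZdist : ∀ k, 1 ≤ k → μ.map (Z k) = ν)
    (hZindep : iIndepFun Z μ) (k : ℕ) :
    ∫ ω, oddsChain lam alp t φ Z (k + 1) ω ∂μ ≤ exp (lam * t) * ∫ ω, oddsChain lam alp t φ Z k ω ∂μ
      + (lam ^ 2 + 2 * lam) * (∫ z, jfunEnvelope lam alp z ^ 2 ∂ν) * t := by
  have hlaw := hZdist (k + 1) (by omega)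
  have h := (oddsChain_indepFun (alp := alp) (φ := φ) hZ hZindep k).integral_comp_mul_add
    (hZ _).aemeasurable
    (memLp_oddsChain hlam ht hZ hZdist hZindep k)
    (hlaw ▸ memLp_jfunSlope (alp := alp) hlam (Ioc_subset_Icc_self ht))
    (hlaw ▸ memLp_jfunIntercept (alp := alp) hlam ht)
  have hslope : ∫ z, jfunSlope lam alp t z ∂ν = exp (lam * t) := by
    simpa using integral_jfunSlope_pow (lam := lam) (alp := alp) ht.1.le 1
  have hM : 0 ≤ ∫ z, jfunEnvelope lam alp z ^ 2 ∂ν :=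
    integral_nonneg fun _ => sq_nonneg _
  rw [hlaw, hslope] at h
  simp_rw [oddsChain_succ]
  rw [h]
  nlinarith [integral_jfunIntercept_le (alp := alp) hlam ht,
    mul_nonneg (mul_nonneg (by positivity : 0 ≤ lam ^ 2 + lam) hM) ht.1.le]

lemma integral_oddsChain_succ_sq_le (hlam : 0 ≤ lam) (ht : t ∈ Ioc 0 1) (hφ : 0 ≤ φ)
    (hZ : ∀ k, Measurable (Z k)) (hZdist : ∀ k, 1 ≤ k → μ.map (Z k) = ν)
    (hZindep : iIndepFun Z μ) (k : ℕ) :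
    ∫ ω, oddsChain lam alp t φ Z (k + 1) ω ^ 2 ∂μ ≤
      exp ((2 * lam + alp ^ 2) * t) * (∫ ω, oddsChain lam alp t φ Z k ω ^ 2 ∂μ)
      + (lam ^ 2 + 2 * lam) * (∫ z, jfunEnvelope lam alp z ^ 2 ∂ν) * t
        * (∫ ω, oddsChain lam alp t φ Z k ω ∂μ)
      + (lam ^ 2 + 2 * lam) * (∫ z, jfunEnvelope lam alp z ^ 2 ∂ν) * t ^ 2 := by
  have hlaw := hZdist (k + 1) (by omega)
  have h := (oddsChain_indepFun (alp := alp) (φ := φ) hZ hZindep k).integral_comp_mul_add_sq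
    (hZ _).aemeasurable
    (memLp_oddsChain hlam ht hZ hZdist hZindep k)
    (hlaw ▸ memLp_jfunSlope (alp := alp) hlam (Ioc_subset_Icc_self ht))
    (hlaw ▸ memLp_jfunIntercept (alp := alp) hlam ht)
  have hslope : ∫ z, jfunSlope lam alp t z ^ 2 ∂ν = exp ((2 * lam + alp ^ 2) * t) := by
    rw [integral_jfunSlope_pow ht.1.le 2]; ring_nf
  have hM : 0 ≤ ∫ z, jfunEnvelope lam alp z ^ 2 ∂ν :=
    integral_nonneg fun _ => sq_nonneg _
  have hm : 0 ≤ ∫ ω, oddsChain lam alp t φ Z k ω ∂μ :=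
    integral_nonneg fun ω => oddsChain_nonneg hlam ht.1.le hφ k ω
  rw [hlaw, hslope] at h
  simp_rw [oddsChain_succ]
  rw [h]
  have hcross := mul_le_mul_of_nonneg_right
    (integral_jfunSlope_mul_jfunIntercept_le (alp := alp) hlam ht) hm
  have hsq := integral_jfunIntercept_sq_le (alp := alp) hlam ht
  have ht0 := ht.1
  have h₁ : 0 ≤ lam ^ 2 * (∫ z, jfunEnvelope lam alp z ^ 2 ∂ν) * t *
      ∫ ω, oddsChain lam alp t φ Z k ω ∂μ := by positivity
  have h₂ : 0 ≤ 2 * lam * (∫ z, jfunEnvelope lam alp z ^ 2 ∂ν) * t ^ 2 := by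
    positivity
  nlinarith

end oddsChainMoments

theorem oddsChain_second_moment_growth_general (lam alp : ℝ) (hlam : 0 < lam)
    {Ω : Type*} [MeasurableSpace Ω] (μ : MeasureTheory.Measure Ω) [IsProbabilityMeasure μ]
    (Z : ℕ → Ω → ℝ) (hZmeas : ∀ k, Measurable (Z k))
    (hZdist : ∀ k, 1 ≤ k → μ.map (Z k) = ProbabilityTheory.gaussianReal 0 1)
    (hZindep : ProbabilityTheory.iIndepFun Z μ) :
    ∃ C : ℝ, 0 < C ∧ ∀ t : ℝ, t ∈ Set.Ioc (0:ℝ) 1 → ∀ k : ℕ, ∀ φ : ℝ, 0 ≤ φ →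
      Integrable (fun ω => (oddsChain lam alp t φ Z k ω) ^ 2) μ ∧
        ∫ ω, (oddsChain lam alp t φ Z k ω) ^ 2 ∂μ ≤
          C * (φ ^ 2 + φ + 1) * Real.exp ((2 * lam + alp ^ 2) * k * t) := by
  set K := (lam ^ 2 + 2 * lam) * ∫ z, jfunEnvelope lam alp z ^ 2 ∂ν
  have hK : 0 ≤ K := by positivity
  have hlc : lam < 2 * lam + alp ^ 2 := by nlinarith [sq_nonneg alp]
  refine ⟨1 + K * (1 + K / lam) / (2 * lam + alp ^ 2 - lam) + K / (2 * lam + alp ^ 2),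
    by have hgap := sub_pos.mpr hlc; positivity,
    fun t ht k φ hφ => ⟨(memLp_oddsChain hlam.le ht hZmeas hZdist hZindep k).integrable_sq, ?_⟩⟩
  exact le_mul_exp_of_coupled_recursion (m := fun k => ∫ ω, oddsChain lam alp t φ Z k ω ∂μ)
    (v := fun k => ∫ ω, oddsChain lam alp t φ Z k ω ^ 2 ∂μ) hlam hlc hK (Ioc_subset_Icc_self ht) hφ
    (by simp [oddsChain]) (by simp [oddsChain])
    (integral_oddsChain_succ_le hlam.le ht hZmeas hZdist hZindep)
    (integral_oddsChain_succ_sq_le hlam.le ht hφ hZmeas hZdist hZindep) k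

/-- Uniform second-moment growth bound: there is `C > 0` depending only on `λ` and `α`
such that for every step size `t ∈ (0, 1]`, every `k` and every initial odds `φ ≥ 0`,
`E[Φₖ²] ≤ C (φ² + φ + 1) e^{(2λ+α²)kt}`. -/
theorem oddsChain_second_moment_growth (lam alp : ℝ) (hlam : 0 < lam) (halp : 0 < alp)
    {Ω : Type*} [MeasurableSpace Ω] (μ : MeasureTheory.Measure Ω) [IsProbabilityMeasure μ]
    (Z : ℕ → Ω → ℝ) (hZmeas : ∀ k, Measurable (Z k))
    (hZdist : ∀ k, 1 ≤ k → μ.map (Z k) = ProbabilityTheory.gaussianReal 0 1)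
    (hZindep : ProbabilityTheory.iIndepFun Z μ) :
    ∃ C : ℝ, 0 < C ∧ ∀ t : ℝ, t ∈ Set.Ioc (0:ℝ) 1 → ∀ k : ℕ, ∀ φ : ℝ, 0 ≤ φ →
      Integrable (fun ω => (oddsChain lam alp t φ Z k ω) ^ 2) μ ∧
        ∫ ω, (oddsChain lam alp t φ Z k ω) ^ 2 ∂μ ≤
          C * (φ ^ 2 + φ + 1) * Real.exp ((2 * lam + alp ^ 2) * k * t) :=
  oddsChain_second_moment_growth_general lam alp hlam μ Z hZmeas hZdist hZindep
end

section
/- Let w : [0, ∞) → ℝ be Lipschitz continuous with −1/c ≤ w(x) ≤ 0 for all x ≥ 0. Then the map (t, φ) ↦ Jw(t, φ) is jointly continuous on (0, ∞) × [0, ∞), and the map φ ↦ J₀w(φ) is continuous on [0, ∞). -/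
open MeasureTheory Real

/-- Deterministic evolution of the odds process between observations. -/
noncomputable def varphi (lam t x : ℝ) : ℝ := Real.exp (lam * t) * (x + 1) - 1

/-- The averaging operator `K`: Gaussian expectation of `w` applied to the
one-step odds update. -/
noncomputable def Kop (lam alp : ℝ) (w : ℝ → ℝ) (t φ : ℝ) : ℝ :=
  ∫ z : ℝ, w (jfun lam alp t φ z) * gaussDensity z

/-- The jump operator `J`: running cost until the next observation at time `t`,
plus the discounted continuation value after that observation. -/
noncomputable def Jop (lam alp c : ℝ) (w : ℝ → ℝ) (t φ : ℝ) : ℝ :=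
  (∫ u in (0:ℝ)..t, Real.exp (-(lam * u)) * (varphi lam u φ - lam / c)) +
    (if 0 < t then Real.exp (-(lam * t)) * Kop lam alp w t φ else 0)

/-- The optimized jump operator `J₀ w(φ) = inf_{t ≥ 0} J w(t, φ)`. -/
noncomputable def J0op (lam alp c : ℝ) (w : ℝ → ℝ) (φ : ℝ) : ℝ :=
  ⨅ t : Set.Ici (0:ℝ), Jop lam alp c w t φ

/-!
`K w` is continuous by dominated convergence: `|w| ≤ 1/c` on `[0, ∞)` and `j` is jointly
continuous on `t ≥ 0` once its inner integral is rescaled to `[0, 1]`. The running cost has a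
closed form, so `J w` is continuous for `t > 0`.

For `J₀ w`, `j(t, φ, z) - j(t, φ', z) = e^{α z √t + (λ - α²/2) t} (φ - φ')` has Gaussian mean
`e^{λ t} (φ - φ')`, which the discount `e^{-λ t}` cancels, so `J w(t, ·)` is `(t + L)`-Lipschitz.
Since `J w(t, φ) ≥ t - T` for an explicit `T` while `J w(0, φ) = 0`, times `t > T` never improve
on `t = 0`, and the infimum `J₀ w` is `(T + L)`-Lipschitz.
-/

open ProbabilityTheory Set

lemma exp_mul_mul_gaussDensity (a z : ℝ) :
    exp (a * z) * gaussDensity z = exp (a ^ 2 / 2) * gaussianPDFReal a 1 z := by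
  have hsq : a * z + -z ^ 2 / 2 = a ^ 2 / 2 + -(z - a) ^ 2 / 2 := by ring
  simp only [gaussDensity, gaussianPDFReal, NNReal.coe_one, mul_one]
  rw [div_eq_mul_inv, ← mul_assoc, ← exp_add, hsq, exp_add]
  ring

lemma integrable_exp_mul_mul_gaussDensity (a : ℝ) :
    Integrable fun z => exp (a * z) * gaussDensity z := by
  simp_rw [exp_mul_mul_gaussDensity]
  exact (integrable_gaussianPDFReal a 1).const_mul _

lemma integral_exp_mul_mul_gaussDensity (a : ℝ) :
    ∫ z, exp (a * z) * gaussDensity z = exp (a ^ 2 / 2) := by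
  simp_rw [exp_mul_mul_gaussDensity]
  rw [integral_const_mul, integral_gaussianPDFReal_eq_one a one_ne_zero, mul_one]

lemma gaussDensity_nonneg (z : ℝ) : 0 ≤ gaussDensity z := by
  unfold gaussDensity; positivity

lemma integrable_gaussDensity : Integrable gaussDensity := by
  simpa using integrable_exp_mul_mul_gaussDensity 0

lemma integral_gaussDensity : ∫ z, gaussDensity z = 1 := by
  simpa using integral_exp_mul_mul_gaussDensity 0

lemma abs_integral_mul_gaussDensity_le {g : ℝ → ℝ} {M : ℝ} (hg : ∀ z, |g z| ≤ M) :
    |∫ z, g z * gaussDensity z| ≤ M := by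
  calc |∫ z, g z * gaussDensity z| ≤ ∫ z, M * gaussDensity z := by
        rw [← norm_eq_abs]
        refine norm_integral_le_of_norm_le (integrable_gaussDensity.const_mul M) (.of_forall ?_)
        intro z
        rw [norm_mul, norm_of_nonneg (gaussDensity_nonneg z)]
        exact mul_le_mul_of_nonneg_right (hg z) (gaussDensity_nonneg z)
    _ = M := by rw [integral_const_mul, integral_gaussDensity, mul_one]

lemma continuousOn_integral_mul_gaussDensity {X : Type*} [TopologicalSpace X]
    [FirstCountableTopology X] {G : X → ℝ → ℝ} {s : Set X} {M : ℝ}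
    (hG : ContinuousOn (Function.uncurry G) (s ×ˢ univ)) (hGM : ∀ x ∈ s, ∀ z, |G x z| ≤ M) :
    ContinuousOn (fun x => ∫ z, G x z * gaussDensity z) s := by
  have hγ : Continuous gaussDensity := by unfold gaussDensity; fun_prop
  refine continuousOn_of_dominated (bound := fun z => M * gaussDensity z)
    (fun x hx => ?_) (fun x hx => .of_forall fun z => ?_) (integrable_gaussDensity.const_mul M)
    (.of_forall fun z => ?_)
  · have : Continuous fun z => Function.uncurry G (x, z) :=
      hG.comp_continuous (continuous_const.prodMk continuous_id) fun z => ⟨hx, mem_univ z⟩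
    exact (this.mul hγ).aestronglyMeasurable
  · rw [norm_mul, norm_of_nonneg (gaussDensity_nonneg z)]
    exact mul_le_mul_of_nonneg_right (hGM x hx z) (gaussDensity_nonneg z)
  · exact (hG.comp (continuousOn_id.prodMk continuousOn_const) fun x hx => ⟨hx, mem_univ z⟩).mul
      continuousOn_const

lemma jfun_eq_mul_intervalIntegral_zero_one {t : ℝ} (lam alp φ z : ℝ) (ht : 0 ≤ t) :
    jfun lam alp t φ z = exp (alp * z * √t + (lam - alp ^ 2 / 2) * t) * φ +
      t * ∫ s in (0:ℝ)..1,
        lam * exp (lam * t * s + alp * z * √t * s - alp ^ 2 * t * s ^ 2 / 2) := by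
  rcases ht.eq_or_lt with rfl | ht
  · simp [jfun]
  have hexp : ∀ s : ℝ, lam * t * s + alp * z * √t * s - alp ^ 2 * t * s ^ 2 / 2
      = (lam + alp * z / √t) * (t * s) - alp ^ 2 * (t * s) ^ 2 / (2 * t) := fun s => by
    field_simp
    linear_combination (2 * alp * z * s) * sq_sqrt ht.le
  have hscale := intervalIntegral.smul_integral_comp_mul_left (a := 0) (b := 1)
    (fun u => lam * exp ((lam + alp * z / √t) * u - alp ^ 2 * u ^ 2 / (2 * t))) t
  simp only [smul_eq_mul, mul_zero, mul_one] at hscale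
  simp_rw [hexp, hscale]
  rfl

lemma continuousOn_jfun (lam alp : ℝ) :
    ContinuousOn (fun q : (ℝ × ℝ) × ℝ => jfun lam alp q.1.1 q.1.2 q.2) {q | 0 ≤ q.1.1} :=
  (Continuous.continuousOn (by fun_prop)).congr fun q hq =>
    jfun_eq_mul_intervalIntegral_zero_one lam alp q.1.2 q.2 hq

lemma jfun_nonneg {lam t φ : ℝ} (alp z : ℝ) (hlam : 0 ≤ lam) (ht : 0 ≤ t) (hφ : 0 ≤ φ) :
    0 ≤ jfun lam alp t φ z :=
  add_nonneg (mul_nonneg (exp_pos _).le hφ)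
    (intervalIntegral.integral_nonneg ht fun _ _ => mul_nonneg hlam (exp_pos _).le)

lemma jfun_sub_jfun (lam alp t φ φ' z : ℝ) :
    jfun lam alp t φ z - jfun lam alp t φ' z
      = exp (alp * z * √t + (lam - alp ^ 2 / 2) * t) * (φ - φ') := by
  unfold jfun; ring

section Operators

variable {lam alp c M : ℝ} {w : ℝ → ℝ} {L : NNReal}

lemma abs_Kop_le (hlam : 0 ≤ lam) (hwM : ∀ x, 0 ≤ x → |w x| ≤ M) {t φ : ℝ} (ht : 0 ≤ t)
    (hφ : 0 ≤ φ) : |Kop lam alp w t φ| ≤ M :=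
  abs_integral_mul_gaussDensity_le fun z => hwM _ (jfun_nonneg alp z hlam ht hφ)

lemma continuousOn_Kop (hlam : 0 ≤ lam) (hw : ContinuousOn w (Ici 0))
    (hwM : ∀ x, 0 ≤ x → |w x| ≤ M) :
    ContinuousOn (fun p : ℝ × ℝ => Kop lam alp w p.1 p.2) (Ici 0 ×ˢ Ici 0) := by
  have hj : ContinuousOn (fun q : (ℝ × ℝ) × ℝ => jfun lam alp q.1.1 q.1.2 q.2)
      ((Ici 0 ×ˢ Ici 0) ×ˢ univ) :=
    (continuousOn_jfun lam alp).mono fun q hq => hq.1.1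
  have hwj : ContinuousOn (fun q : (ℝ × ℝ) × ℝ => w (jfun lam alp q.1.1 q.1.2 q.2))
      ((Ici 0 ×ˢ Ici 0) ×ˢ univ) :=
    hw.comp hj fun q hq => jfun_nonneg alp q.2 hlam hq.1.1 hq.1.2
  exact continuousOn_integral_mul_gaussDensity hwj fun p hp z =>
    hwM _ (jfun_nonneg alp z hlam hp.1 hp.2)

lemma abs_Kop_sub_Kop_le (hlam : 0 ≤ lam) (hLip : LipschitzOnWith L w (Ici 0))
    (hwM : ∀ x, 0 ≤ x → |w x| ≤ M) {t φ φ' : ℝ} (ht : 0 ≤ t) (hφ : 0 ≤ φ) (hφ' : 0 ≤ φ') :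
    |Kop lam alp w t φ - Kop lam alp w t φ'| ≤ L * exp (lam * t) * |φ - φ'| := by
  have hj : ∀ ψ, 0 ≤ ψ → ∀ z, jfun lam alp t ψ z ∈ Ici 0 := fun ψ hψ z =>
    jfun_nonneg alp z hlam ht hψ
  have hint : ∀ ψ, 0 ≤ ψ → Integrable fun z => w (jfun lam alp t ψ z) * gaussDensity z :=
    fun ψ hψ => by
      have hjz : Continuous fun z => jfun lam alp t ψ z :=
        (continuousOn_jfun lam alp).comp_continuous (f := fun z => ((t, ψ), z)) (by fun_prop)
          fun _ => ht
      exact integrable_gaussDensity.bdd_mul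
        (hLip.continuousOn.comp_continuous hjz (hj ψ hψ)).aestronglyMeasurable
        (.of_forall fun z => hwM _ (hj ψ hψ z))
  have hpoint : ∀ z, ‖(w (jfun lam alp t φ z) - w (jfun lam alp t φ' z)) * gaussDensity z‖
      ≤ L * |φ - φ'| * exp ((lam - alp ^ 2 / 2) * t) *
        (exp (alp * √t * z) * gaussDensity z) := fun z => by
    have hsplit : exp (alp * z * √t + (lam - alp ^ 2 / 2) * t)
        = exp ((lam - alp ^ 2 / 2) * t) * exp (alp * √t * z) := by
      rw [← exp_add]; ring_nf
    have hLz := hLip.dist_le_mul _ (hj φ hφ z) _ (hj φ' hφ' z)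
    rw [dist_eq, dist_eq, jfun_sub_jfun, abs_mul, abs_of_pos (exp_pos _), hsplit] at hLz
    rw [norm_mul, norm_of_nonneg (gaussDensity_nonneg z), norm_eq_abs]
    calc _ ≤ L * (exp ((lam - alp ^ 2 / 2) * t) * exp (alp * √t * z) * |φ - φ'|) *
          gaussDensity z := mul_le_mul_of_nonneg_right hLz (gaussDensity_nonneg z)
      _ = _ := by ring
  calc |Kop lam alp w t φ - Kop lam alp w t φ'|
      = ‖∫ z, (w (jfun lam alp t φ z) - w (jfun lam alp t φ' z)) * gaussDensity z‖ := by
        simp_rw [Kop, sub_mul]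
        rw [integral_sub (hint φ hφ) (hint φ' hφ'), norm_eq_abs]
    _ ≤ ∫ z, L * |φ - φ'| * exp ((lam - alp ^ 2 / 2) * t) *
          (exp (alp * √t * z) * gaussDensity z) :=
        norm_integral_le_of_norm_le
          ((integrable_exp_mul_mul_gaussDensity _).const_mul _) (.of_forall hpoint)
    _ = L * exp (lam * t) * |φ - φ'| := by
        rw [integral_const_mul, integral_exp_mul_mul_gaussDensity, mul_pow, sq_sqrt ht,
          mul_assoc, ← exp_add]
        ring_nf

lemma integral_exp_neg_mul (t : ℝ) (hlam : lam ≠ 0) :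
    ∫ u in (0:ℝ)..t, exp (-(lam * u)) = (1 - exp (-(lam * t))) / lam := by
  simp_rw [← neg_mul]
  rw [intervalIntegral.integral_comp_mul_left exp (neg_ne_zero.mpr hlam), integral_exp,
    mul_zero, exp_zero, smul_eq_mul, neg_mul, inv_neg]
  field_simp
  ring

lemma integral_running_cost (c φ t : ℝ) (hlam : lam ≠ 0) :
    ∫ u in (0:ℝ)..t, exp (-(lam * u)) * (varphi lam u φ - lam / c)
      = (φ + 1) * t - (1 + lam / c) * ((1 - exp (-(lam * t))) / lam) := by
  have hpoint : ∀ u, exp (-(lam * u)) * (varphi lam u φ - lam / c)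
      = (φ + 1) - (1 + lam / c) * exp (-(lam * u)) := fun u => by
    rw [varphi, exp_neg]
    field_simp
    ring
  simp_rw [hpoint]
  rw [intervalIntegral.integral_sub intervalIntegrable_const
      ((by fun_prop : Continuous fun u => (1 + lam / c) * exp (-(lam * u))).intervalIntegrable _ _),
    intervalIntegral.integral_const_mul, integral_exp_neg_mul t hlam,
    intervalIntegral.integral_const, smul_eq_mul, sub_zero, mul_comm t]

lemma Jop_zero (φ : ℝ) : Jop lam alp c w 0 φ = 0 := by
  simp [Jop]

lemma Jop_of_pos (hlam : lam ≠ 0) {t : ℝ} (φ : ℝ) (ht : 0 < t) :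
    Jop lam alp c w t φ = (φ + 1) * t - (1 + lam / c) * ((1 - exp (-(lam * t))) / lam)
      + exp (-(lam * t)) * Kop lam alp w t φ := by
  rw [Jop, integral_running_cost c φ t hlam, if_pos ht]

lemma continuousOn_Jop (hlam : 0 < lam) (hw : ContinuousOn w (Ici 0))
    (hwM : ∀ x, 0 ≤ x → |w x| ≤ M) :
    ContinuousOn (fun p : ℝ × ℝ => Jop lam alp c w p.1 p.2) (Ioi 0 ×ˢ Ici 0) := by
  refine ContinuousOn.congr ?_ fun p hp => Jop_of_pos hlam.ne' p.2 hp.1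
  exact (Continuous.continuousOn (by fun_prop)).add ((Continuous.continuousOn (by fun_prop)).mul
    ((continuousOn_Kop hlam.le hw hwM).mono (prod_mono Ioi_subset_Ici_self subset_rfl)))

lemma sub_le_Jop (hlam : 0 < lam) (hc : 0 < c) (hwM : ∀ x, 0 ≤ x → |w x| ≤ M) {t φ : ℝ}
    (ht : 0 ≤ t) (hφ : 0 ≤ φ) : t - ((1 + lam / c) / lam + M) ≤ Jop lam alp c w t φ := by
  have hA : 0 ≤ (1 + lam / c) / lam := by positivity
  have hM : 0 ≤ M := (abs_nonneg _).trans (hwM 0 le_rfl)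
  rcases ht.eq_or_lt with rfl | ht
  · rw [Jop_zero]; linarith
  have hK := abs_le.mp (abs_Kop_le hlam.le hwM ht.le hφ (alp := alp))
  have he₀ := exp_pos (-(lam * t))
  have he₁ : exp (-(lam * t)) ≤ 1 := exp_le_one_iff.mpr (by nlinarith)
  have hcost : (1 + lam / c) * ((1 - exp (-(lam * t))) / lam)
      = (1 + lam / c) / lam * (1 - exp (-(lam * t))) := by ring
  rw [Jop_of_pos hlam.ne' φ ht, hcost]
  nlinarith [mul_nonneg hA he₀.le, mul_nonneg hφ ht.le, mul_le_mul_of_nonneg_left hK.1 he₀.le,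
    mul_le_mul_of_nonneg_right he₁ hM]

lemma abs_Jop_sub_Jop_le (hlam : 0 < lam) (hLip : LipschitzOnWith L w (Ici 0))
    (hwM : ∀ x, 0 ≤ x → |w x| ≤ M) {t φ φ' : ℝ} (ht : 0 ≤ t) (hφ : 0 ≤ φ) (hφ' : 0 ≤ φ') :
    |Jop lam alp c w t φ - Jop lam alp c w t φ'| ≤ (t + L) * |φ - φ'| := by
  rcases ht.eq_or_lt with rfl | ht
  · simp only [Jop_zero, sub_zero, abs_zero, zero_add]; positivity
  have hK := abs_Kop_sub_Kop_le hlam.le hLip hwM ht.le hφ hφ' (alp := alp)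
  have hdiff : Jop lam alp c w t φ - Jop lam alp c w t φ'
      = t * (φ - φ') + exp (-(lam * t)) * (Kop lam alp w t φ - Kop lam alp w t φ') := by
    rw [Jop_of_pos hlam.ne' φ ht, Jop_of_pos hlam.ne' φ' ht]; ring
  calc _ ≤ t * |φ - φ'| + exp (-(lam * t)) * (L * exp (lam * t) * |φ - φ'|) := by
        rw [hdiff]
        refine (abs_add_le _ _).trans (add_le_add ?_ ?_)
        · rw [abs_mul, abs_of_pos ht]
        · rw [abs_mul, abs_of_pos (exp_pos _)]
          exact mul_le_mul_of_nonneg_left hK (exp_pos _).le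
    _ = (t + L) * |φ - φ'| := by
        rw [← mul_assoc, mul_left_comm, ← exp_add, neg_add_cancel, exp_zero]; ring

lemma lipschitzOnWith_ciInf {ι α : Type*} [Nonempty ι] [PseudoMetricSpace α] {f : ι → α → ℝ}
    {s : Set α} {K : ℝ} (hbdd : ∀ x ∈ s, BddBelow (range fun i => f i x))
    (hle : ∀ x ∈ s, ∀ y ∈ s, ∀ i, ∃ j, f j x ≤ f i y + K * dist x y) :
    LipschitzOnWith K.toNNReal (fun x => ⨅ i, f i x) s :=
  LipschitzOnWith.of_le_add_mul' K fun x hx y hy => by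
    have : (⨅ i, f i x) - K * dist x y ≤ ⨅ i, f i y := le_ciInf fun i => by
      obtain ⟨j, hj⟩ := hle x hx y hy i
      linarith [ciInf_le (hbdd x hx) j]
    linarith

lemma lipschitzOnWith_J0op (hlam : 0 < lam) (hc : 0 < c) (hLip : LipschitzOnWith L w (Ici 0))
    (hwM : ∀ x, 0 ≤ x → |w x| ≤ M) :
    LipschitzOnWith ((1 + lam / c) / lam + M + L).toNNReal (J0op lam alp c w) (Ici 0) := by
  set T := (1 + lam / c) / lam + M
  have hT : 0 ≤ T := add_nonneg (by positivity) ((abs_nonneg _).trans (hwM 0 le_rfl))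
  refine lipschitzOnWith_ciInf (fun φ hφ => ⟨-T, ?_⟩) fun φ hφ φ' hφ' t => ?_
  · rintro _ ⟨t, rfl⟩
    linarith [sub_le_Jop hlam hc hwM t.2 hφ (alp := alp), mem_Ici.mp t.2]
  by_cases htT : (t : ℝ) ≤ T
  · refine ⟨t, ?_⟩
    have hJ := (abs_le.mp (abs_Jop_sub_Jop_le hlam hLip hwM (c := c) (alp := alp) t.2 hφ hφ')).2
    have hK := mul_le_mul_of_nonneg_right (add_le_add_right htT L) (abs_nonneg (φ - φ'))
    rw [dist_eq]
    linarith
  · refine ⟨⟨0, self_mem_Ici⟩, ?_⟩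
    have hdist : 0 ≤ (T + L) * dist φ φ' := by positivity
    linarith [Jop_zero (lam := lam) (alp := alp) (c := c) (w := w) φ,
      sub_le_Jop hlam hc hwM t.2 hφ' (alp := alp)]

end Operators

theorem Jop_J0op_continuous_general (lam alp c : ℝ) (hlam : 0 < lam) (hc : 0 < c)
    (w : ℝ → ℝ) (L : NNReal) (hLip : LipschitzOnWith L w (Set.Ici (0:ℝ)))
    (hwl : ∀ x : ℝ, 0 ≤ x → -1 / c ≤ w x) (hwu : ∀ x : ℝ, 0 ≤ x → w x ≤ 0) :
    ContinuousOn (fun p : ℝ × ℝ => Jop lam alp c w p.1 p.2)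
        (Set.Ioi (0:ℝ) ×ˢ Set.Ici (0:ℝ)) ∧
      ContinuousOn (J0op lam alp c w) (Set.Ici (0:ℝ)) := by
  have hwM : ∀ x, 0 ≤ x → |w x| ≤ 1 / c := fun x hx => abs_le.mpr
    ⟨by linarith [hwl x hx, neg_div c 1], by linarith [hwu x hx, one_div_pos.mpr hc]⟩
  exact ⟨continuousOn_Jop hlam hLip.continuousOn hwM,
    (lipschitzOnWith_J0op hlam hc hLip hwM).continuousOn⟩

/-- For `w` Lipschitz on `[0, ∞)` with values in `[−1/c, 0]`, the map
`(t, φ) ↦ J w(t, φ)` is jointly continuous on `(0, ∞) × [0, ∞)`, and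
`φ ↦ J₀ w(φ)` is continuous on `[0, ∞)`. -/
theorem Jop_J0op_continuous (lam alp c : ℝ) (hlam : 0 < lam) (halp : 0 < alp) (hc : 0 < c)
    (w : ℝ → ℝ) (L : NNReal) (hLip : LipschitzOnWith L w (Set.Ici (0:ℝ)))
    (hwl : ∀ x : ℝ, 0 ≤ x → -1 / c ≤ w x) (hwu : ∀ x : ℝ, 0 ≤ x → w x ≤ 0) :
    ContinuousOn (fun p : ℝ × ℝ => Jop lam alp c w p.1 p.2)
        (Set.Ioi (0:ℝ) ×ˢ Set.Ici (0:ℝ)) ∧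
      ContinuousOn (J0op lam alp c w) (Set.Ici (0:ℝ)) :=
  Jop_J0op_continuous_general lam alp c hlam hc w L hLip hwl hwu
end
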